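/- Let 𝒜 be a prime unital ∗-algebra over ℂ containing a nontrivial projection P₁, let P₂ = I − P₁, and let Φ : 𝒜 → 𝒜 be a nonlinear ⋄-derivation such that Φ(I/2) and Φ(iI/2) are self-adjoint. Then for every A₁₁ ∈ 𝒜₁₁ and A₁₂ ∈ 𝒜₁₂ one has Φ(A₁₁ + A₁₂) = Φ(A₁₁) + Φ(A₁₂). -/

import Mathlib

/-!
Write `δ(Y, Z) = Φ(Y + Z) − Φ Y − Φ Z`. Since `⋄` is biadditive and `Φ 0 = 0`, the derivation
rule gives `δ(C ⋄ Y, C ⋄ Z) = C ⋄ δ(Y, Z)`; if `e = e*` and `e Z = 0` then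
`e ⋄ Z = (i e) ⋄ Z = 0`, so `e ⋄ δ(Y, Z) = (i e) ⋄ δ(Y, Z) = 0`, which forces `e δ(Y, Z) = 0`.
Applied to `P₁` and `P₂` this makes `Φ` additive on `U + V` whenever `P₂ U = 0 = P₁ V`.

For `T = δ(A₁₁, A₁₂)` this gives `P₂ T = 0`. Taking `D = P₁ d P₂`, resp. `D = P₁ d P₁`, the
identity `T ⋄ D = δ(A₁₁ ⋄ D, A₁₂ ⋄ D)`, the Peirce decomposition of the two arguments and the
additivity above reduce `P₁ (T ⋄ D)`, resp. `P₂ (T ⋄ D)`, to a defect killed by `P₁`, resp. `P₂`.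
This gives `P₁ T* d P₂ = 0`, resp. `P₂ T* d P₁ = 0`, for all `d`; primeness gives
`P₁ T* = P₂ T* = 0`, so `T = 0`.
-/

namespace DiamondDerivation

def addDefect {M N : Type*} [Add M] [Sub N] (Φ : M → N) (Y Z : M) : N := Φ (Y + Z) - Φ Y - Φ Z

theorem addDefect_comm {M N : Type*} [AddCommMagma M] [AddCommGroup N] (Φ : M → N) (Y Z : M) :
    addDefect Φ Y Z = addDefect Φ Z Y := by
  rw [addDefect, addDefect, add_comm Y Z, sub_right_comm]

theorem addDefect_eq_zero_iff {M N : Type*} [Add M] [AddCommGroup N] {Φ : M → N} {Y Z : M} :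
    addDefect Φ Y Z = 0 ↔ Φ (Y + Z) = Φ Y + Φ Z := by
  rw [addDefect, sub_sub, sub_eq_zero]

variable {𝒜 : Type*} [Ring 𝒜] [StarRing 𝒜]

def diamond (A B : 𝒜) : 𝒜 := star A * B - star B * A

local infixl:70 " ⋄ " => diamond

theorem diamond_def (A B : 𝒜) : A ⋄ B = star A * B - star B * A := rfl

theorem diamond_add_left (Y Z D : 𝒜) : (Y + Z) ⋄ D = Y ⋄ D + Z ⋄ D := by
  simp only [diamond, star_add, mul_add, add_mul]; abel

theorem diamond_add_right (C Y Z : 𝒜) : C ⋄ (Y + Z) = C ⋄ Y + C ⋄ Z := by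
  simp only [diamond, star_add, mul_add, add_mul]; abel

theorem mul_diamond_of_mul_star_eq_zero {e D : 𝒜} (h : e * star D = 0) (T : 𝒜) :
    e * (T ⋄ D) = e * star T * D := by
  rw [diamond_def, mul_sub, ← mul_assoc e (star D), h, zero_mul, sub_zero, mul_assoc]

theorem mul_eq_zero_of_diamond_eq_zero [Algebra ℂ 𝒜] [StarModule ℂ 𝒜] {e R : 𝒜}
    (he : IsSelfAdjoint e) (h : e ⋄ R = 0) (hI : (Complex.I • e) ⋄ R = 0) : e * R = 0 := by
  have key : (-(2 * Complex.I)) • (e * R) = (Complex.I • e) ⋄ R - Complex.I • (e ⋄ R) := by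
    simp only [diamond, star_smul, he.star_eq, Complex.star_def, Complex.conj_I, smul_mul_assoc,
      mul_smul_comm, smul_sub]
    module
  rw [h, hI, smul_zero, sub_zero, smul_eq_zero] at key
  exact key.resolve_left (by simp)

def IsDiamondDerivation (Φ : 𝒜 → 𝒜) : Prop :=
  ∀ A B : 𝒜, Φ (A ⋄ B) = Φ A ⋄ B + A ⋄ Φ B

namespace IsDiamondDerivation

variable {Φ : 𝒜 → 𝒜} (hΦ : IsDiamondDerivation Φ)
include hΦ

theorem map_zero : Φ 0 = 0 := by
  simpa [diamond] using hΦ 0 0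

theorem addDefect_zero_right (Y : 𝒜) : addDefect Φ Y 0 = 0 := by
  rw [addDefect, add_zero, sub_self, hΦ.map_zero, sub_zero]

theorem addDefect_diamond_right (C Y Z : 𝒜) :
    addDefect Φ (C ⋄ Y) (C ⋄ Z) = C ⋄ addDefect Φ Y Z := by
  simp only [addDefect, ← diamond_add_right, hΦ _ _]
  simp only [diamond, star_add, star_sub, mul_add, add_mul, mul_sub, sub_mul]
  abel

theorem addDefect_diamond_left (Y Z D : 𝒜) :
    addDefect Φ (Y ⋄ D) (Z ⋄ D) = addDefect Φ Y Z ⋄ D := by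
  simp only [addDefect, ← diamond_add_left, hΦ _ _]
  simp only [diamond, star_add, star_sub, mul_add, add_mul, mul_sub, sub_mul]
  abel

variable [Algebra ℂ 𝒜] [StarModule ℂ 𝒜]

theorem mul_addDefect_eq_zero {e Z : 𝒜} (he : IsSelfAdjoint e) (hZ : e * Z = 0) (Y : 𝒜) :
    e * addDefect Φ Y Z = 0 := by
  have hZe : star Z * e = 0 := by rw [← he.star_eq, ← star_mul, hZ, star_zero]
  have diamond_eq_zero : ∀ C, C ⋄ Z = 0 → C ⋄ addDefect Φ Y Z = 0 := fun C hC ↦ by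
    rw [← hΦ.addDefect_diamond_right, hC, hΦ.addDefect_zero_right]
  refine mul_eq_zero_of_diamond_eq_zero he (diamond_eq_zero e ?_) (diamond_eq_zero _ ?_)
  · rw [diamond_def, he.star_eq, hZ, hZe, sub_zero]
  · rw [diamond_def, star_smul, smul_mul_assoc, mul_smul_comm, he.star_eq, hZ, hZe,
      smul_zero, smul_zero, sub_zero]

section Decomposition

variable {p q : 𝒜} (hp : IsSelfAdjoint p) (hq : IsSelfAdjoint q) (hpq : p + q = 1)
include hp hq hpq

theorem map_add_of_mul_eq_zero {U V : 𝒜} (hU : q * U = 0) (hV : p * V = 0) :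
    Φ (U + V) = Φ U + Φ V := by
  rw [← addDefect_eq_zero_iff, ← one_mul (addDefect Φ U V), ← hpq, add_mul,
    hΦ.mul_addDefect_eq_zero hp hV, addDefect_comm, hΦ.mul_addDefect_eq_zero hq hU, add_zero]

theorem addDefect_add_left_of_mul_eq_zero {U V W : 𝒜} (hU : q * U = 0) (hV : p * V = 0)
    (hW : p * W = 0) : addDefect Φ (U + V) W = addDefect Φ V W := by
  have hVW : p * (V + W) = 0 := by rw [mul_add, hV, hW, add_zero]
  rw [addDefect, addDefect, add_assoc, hΦ.map_add_of_mul_eq_zero hp hq hpq hU hVW,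
    hΦ.map_add_of_mul_eq_zero hp hq hpq hU hV]
  abel

end Decomposition

section Peirce

variable {P₁ P₂ : 𝒜} (hP₁ : IsSelfAdjoint P₁) (hP₂ : IsSelfAdjoint P₂) (hsum : P₁ + P₂ = 1)
  (h₁₂ : P₁ * P₂ = 0) (h₂₁ : P₂ * P₁ = 0)
include hP₁ hP₂ hsum h₁₂ h₂₁

theorem mul_star_addDefect_mul_corner₁₂ (x y d : 𝒜) :
    P₁ * star (addDefect Φ (P₁ * x * P₁) (P₁ * y * P₂)) * (P₁ * d * P₂) = 0 := by
  rw [← mul_diamond_of_mul_star_eq_zero, ← hΦ.addDefect_diamond_left, diamond_def _ (_ * _ * P₂),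
    sub_eq_add_neg, hΦ.addDefect_add_left_of_mul_eq_zero hP₁ hP₂ hsum,
    hΦ.mul_addDefect_eq_zero hP₁]
  all_goals simp [diamond, star_mul, hP₁.star_eq, hP₂.star_eq, mul_sub, ← mul_assoc, h₁₂, h₂₁]

theorem mul_star_addDefect_mul_corner₁₁ (x y d : 𝒜) :
    P₂ * star (addDefect Φ (P₁ * x * P₁) (P₁ * y * P₂)) * (P₁ * d * P₁) = 0 := by
  rw [← mul_diamond_of_mul_star_eq_zero, ← hΦ.addDefect_diamond_left, addDefect_comm,
    diamond_def (_ * _ * P₂), sub_eq_add_neg,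
    hΦ.addDefect_add_left_of_mul_eq_zero hP₂ hP₁ (by rw [add_comm, hsum]),
    hΦ.mul_addDefect_eq_zero hP₂]
  all_goals simp [diamond, star_mul, hP₁.star_eq, hP₂.star_eq, mul_sub, ← mul_assoc, h₁₂, h₂₁]

theorem addDefect_corner_eq_zero (hprime : ∀ a b : 𝒜, (∀ x : 𝒜, a * x * b = 0) → a = 0 ∨ b = 0)
    (hP₁0 : P₁ ≠ 0) (hP₂0 : P₂ ≠ 0) (x y : 𝒜) :
    addDefect Φ (P₁ * x * P₁) (P₁ * y * P₂) = 0 := by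
  set T := addDefect Φ (P₁ * x * P₁) (P₁ * y * P₂)
  have hTP₁ : star T * P₁ = star T := by
    have hP₂T : P₂ * T = 0 := hΦ.mul_addDefect_eq_zero hP₂ (by simp [← mul_assoc, h₂₁]) _
    have hTP₂ : star T * P₂ = 0 := by rw [← hP₂.star_eq, ← star_mul, hP₂T, star_zero]
    simpa [mul_add, hTP₂] using congrArg (star T * ·) hsum
  have h₁ : P₁ * star T = 0 := (hprime _ P₂ fun d ↦ calc
    P₁ * star T * d * P₂ = P₁ * star T * (P₁ * d * P₂) := by
      nth_rw 1 [← hTP₁]; simp only [mul_assoc]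
    _ = 0 := hΦ.mul_star_addDefect_mul_corner₁₂ hP₁ hP₂ hsum h₁₂ h₂₁ x y d).resolve_right hP₂0
  have h₂ : P₂ * star T = 0 := (hprime _ P₁ fun d ↦ calc
    P₂ * star T * d * P₁ = P₂ * star T * (P₁ * d * P₁) := by
      nth_rw 1 [← hTP₁]; simp only [mul_assoc]
    _ = 0 := hΦ.mul_star_addDefect_mul_corner₁₁ hP₁ hP₂ hsum h₁₂ h₂₁ x y d).resolve_right hP₁0
  rw [← star_eq_zero, ← one_mul (star T), ← hsum, add_mul, h₁, h₂, add_zero]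

end Peirce

end IsDiamondDerivation

end DiamondDerivation

open DiamondDerivation

theorem stmt5_general {𝒜 : Type*} [Ring 𝒜] [Algebra ℂ 𝒜] [StarRing 𝒜] [StarModule ℂ 𝒜]
    (hprime : ∀ a b : 𝒜, (∀ x : 𝒜, a * x * b = 0) → a = 0 ∨ b = 0)
    (P₁ : 𝒜) (hP₁star : star P₁ = P₁) (hP₁idem : P₁ * P₁ = P₁)
    (hP₁ne0 : P₁ ≠ 0) (hP₁ne1 : P₁ ≠ 1)
    (Φ : 𝒜 → 𝒜)
    (hΦ : ∀ A B : 𝒜, Φ (star A * B - star B * A) =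
      (star (Φ A) * B - star B * Φ A) + (star A * Φ B - star (Φ B) * A)) :
    ∀ A₁₁ A₁₂ : 𝒜, (∃ x : 𝒜, A₁₁ = P₁ * x * P₁) →
      (∃ x : 𝒜, A₁₂ = P₁ * x * (1 - P₁)) →
      Φ (A₁₁ + A₁₂) = Φ A₁₁ + Φ A₁₂ := by
  rintro _ _ ⟨x, rfl⟩ ⟨y, rfl⟩
  have hΦ : IsDiamondDerivation Φ := hΦ
  have hP₂ : IsSelfAdjoint (1 - P₁) := (IsSelfAdjoint.one 𝒜).sub hP₁star
  have h₁₂ : P₁ * (1 - P₁) = 0 := by rw [mul_sub, mul_one, hP₁idem, sub_self]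
  have h₂₁ : (1 - P₁) * P₁ = 0 := by rw [sub_mul, one_mul, hP₁idem, sub_self]
  exact addDefect_eq_zero_iff.mp <| hΦ.addDefect_corner_eq_zero hP₁star hP₂ (add_sub_cancel P₁ 1)
    h₁₂ h₂₁ hprime hP₁ne0 (sub_ne_zero.mpr hP₁ne1.symm) x y

/-- In a prime unital ∗-algebra over `ℂ` with nontrivial projection `P₁`
and `P₂ = I − P₁`, a nonlinear `⋄`-derivation `Φ` with `Φ(I/2)`, `Φ(iI/2)` self-adjoint
satisfies `Φ(A₁₁ + A₁₂) = Φ(A₁₁) + Φ(A₁₂)` on the Peirce components `𝒜₁₁`, `𝒜₁₂`. -/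
theorem stmt5 {𝒜 : Type*} [Ring 𝒜] [Algebra ℂ 𝒜] [StarRing 𝒜] [StarModule ℂ 𝒜]
    (hprime : ∀ a b : 𝒜, (∀ x : 𝒜, a * x * b = 0) → a = 0 ∨ b = 0)
    (P₁ : 𝒜) (hP₁star : star P₁ = P₁) (hP₁idem : P₁ * P₁ = P₁)
    (hP₁ne0 : P₁ ≠ 0) (hP₁ne1 : P₁ ≠ 1)
    (Φ : 𝒜 → 𝒜)
    (hΦ : ∀ A B : 𝒜, Φ (star A * B - star B * A) =
      (star (Φ A) * B - star B * Φ A) + (star A * Φ B - star (Φ B) * A))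
    (h1 : star (Φ (((1 : ℂ)/2) • (1 : 𝒜))) = Φ (((1 : ℂ)/2) • (1 : 𝒜)))
    (h2 : star (Φ ((Complex.I/2) • (1 : 𝒜))) = Φ ((Complex.I/2) • (1 : 𝒜))) :
    ∀ A₁₁ A₁₂ : 𝒜, (∃ x : 𝒜, A₁₁ = P₁ * x * P₁) →
      (∃ x : 𝒜, A₁₂ = P₁ * x * (1 - P₁)) →
      Φ (A₁₁ + A₁₂) = Φ A₁₁ + Φ A₁₂ :=
  stmt5_general hprime P₁ hP₁star hP₁idem hP₁ne0 hP₁ne1 Φ hΦ
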